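/- arXiv:math/0210228 — 3 statements merged into one kernel-verified Lean document; each statement's English description precedes it below -/
import Mathlib

section
/- Let p > 2, let A be a countable index set, and for each a ∈ A let X_a be a space of functions on a countable set B_a with norm given by a family {(P^{a,i}, W^{a,i}) : i ∈ I_a} of partitions and weights on B_a containing a distinguished indiscrete pair ({B_a}, W^{a,()}), and let W : A → (0,1]. On the disjoint union B = ⨆_{a∈A} B_a define, for each choice function σ = (i(a))_{a∈A} ∈ Π_{a∈A} I_a, the partition P_σ = {{a}×p : a ∈ A, p ∈ P^{a,i(a)}} with weight W_σ(a,b) = w^{a,i(a)}(b), and define the additional pair P_{()} = {B} with weight W_{()}(a,b) = W(a)·w^{a,()}(b). Then for every x = (x_{a,b}), the (p,2,W)-sum norm satisfies ‖x‖_{p,2,W} = sup of ‖x‖_{P_σ,W_σ} over σ ∈ Π_{a∈A} I_a together with ‖x‖_{P_{()},W_{()}}. In particular, the (p,2,W)-sum of spaces with norms given by partitions and weights has a norm given by partitions and weights. -/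
open scoped ENNReal
open MeasureTheory Filter

noncomputable section

variable {α : Type*}

/-- `P` is a partition of the type `α`: a collection of pairwise disjoint
nonempty subsets of `α` whose union is all of `α`. -/
def IsPartition (P : Set (Set α)) : Prop :=
  (∀ N ∈ P, N.Nonempty) ∧ P.PairwiseDisjoint id ∧ ⋃₀ P = Set.univ

/-- A weight function takes values in `(0,1]`. -/
def IsWeight (W : α → ℝ) : Prop := ∀ a, W a ∈ Set.Ioc (0 : ℝ) 1

/-- `‖x‖_{P,W} = (Σ_{N∈P} (Σ_{j∈N} x_j² w_j²)^{p/2})^{1/p}`, valued in `[0,∞]`. -/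
def pwNorm (p : ℝ) (P : Set (Set α)) (W : α → ℝ) (x : α → ℝ) : ℝ≥0∞ :=
  (∑' N : P, (∑' j : N.1, ENNReal.ofReal ((x j.1) ^ 2 * (W j.1) ^ 2)) ^ (p / 2)) ^ (1 / p)

/-- A partition–weight pair on `α`. -/
abbrev PWPair (α : Type*) := Set (Set α) × (α → ℝ)

/-- Every member of the family is a genuine partition–weight pair. -/
def IsPWFamily (𝒞 : Set (PWPair α)) : Prop :=
  ∀ PW ∈ 𝒞, IsPartition PW.1 ∧ IsWeight PW.2

/-- `‖x‖_𝒞 = sup_{(P,W) ∈ 𝒞} ‖x‖_{P,W}`. -/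
def famNorm (p : ℝ) (𝒞 : Set (PWPair α)) (x : α → ℝ) : ℝ≥0∞ :=
  ⨆ PW ∈ 𝒞, pwNorm p PW.1 PW.2 x

/-!
An `ℓ_p`-sum of suprema is a supremum of `ℓ_p`-sums: since each summand `(⨆ i, ‖x_a‖_{P^{a,i}})^p`
can be approximated independently in every coordinate, `∑_a ⨆_i` becomes `⨆_σ ∑_a` over choice
functions `σ`, and `∑_a ‖x_a‖_{P^{a,σ a}}^p` is exactly `‖x‖_{P_σ}^p` for the partition `P_σ` of
`Σ a, B a` obtained by juxtaposing the blocks. The weighted `ℓ_2` part is the norm for the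
indiscrete partition of `Σ a, B a` with weight `W(a) w^{a,()}(b)`.
-/

namespace ENNReal

lemma iSup_rpow {ι : Sort*} {c : ℝ} (hc : 0 < c) (f : ι → ℝ≥0∞) :
    (⨆ i, f i) ^ c = ⨆ i, f i ^ c :=
  (orderIsoRpow c hc).map_iSup f

lemma tsum_iSup_eq_iSup_pi_tsum {A : Type*} {I : A → Type*} [∀ a, Nonempty (I a)]
    (f : ∀ a, I a → ℝ≥0∞) :
    ∑' a, ⨆ i, f a i = ⨆ σ : ∀ a, I a, ∑' a, f a (σ a) := by
  have hpi : ∀ a, ⨆ i, f a i = ⨆ σ : ∀ a, I a, f a (σ a) := fun a =>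
    ((Function.surjective_eval a).iSup_comp (f a)).symm
  calc ∑' a, ⨆ i, f a i
      = ⨆ F : Finset A, ∑ a ∈ F, ⨆ σ : ∀ a, I a, f a (σ a) := by
        simp_rw [← hpi]; exact ENNReal.tsum_eq_iSup_sum
    _ = ⨆ F : Finset A, ⨆ σ : ∀ a, I a, ∑ a ∈ F, f a (σ a) := by
        refine iSup_congr fun F => finsetSum_iSup fun σ τ => ?_
        refine ⟨fun a => if f a (σ a) ≤ f a (τ a) then τ a else σ a, fun a => ?_⟩
        by_cases h : f a (σ a) ≤ f a (τ a) <;> simp [h, le_of_not_ge]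
    _ = ⨆ σ : ∀ a, I a, ∑' a, f a (σ a) := by
        rw [iSup_comm]
        exact iSup_congr fun σ => ENNReal.tsum_eq_iSup_sum.symm

end ENNReal

lemma isPartition_singleton_univ [Nonempty α] : IsPartition ({Set.univ} : Set (Set α)) :=
  ⟨by simp, Set.pairwiseDisjoint_singleton _ _, by simp⟩

lemma IsWeight.mul {f g : α → ℝ} (hf : IsWeight f) (hg : IsWeight g) :
    IsWeight fun a => f a * g a := fun a =>
  ⟨mul_pos (hf a).1 (hg a).1, mul_le_one₀ (hf a).2 (hg a).1.le (hg a).2⟩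

lemma pwNorm_of_isEmpty [IsEmpty α] {p : ℝ} (hp : 0 < p) (P : Set (Set α)) (W x : α → ℝ) :
    pwNorm p P W x = 0 := by
  simp [pwNorm, ENNReal.zero_rpow_of_pos, hp]

lemma pwNorm_singleton_univ {p : ℝ} (hp : p ≠ 0) (W x : α → ℝ) :
    pwNorm p {Set.univ} W x = (∑' j, ENNReal.ofReal (x j ^ 2 * W j ^ 2)) ^ ((1 : ℝ) / 2) := by
  rw [pwNorm, tsum_singleton (f := fun N : Set α =>
      (∑' j : N, ENNReal.ofReal (x j ^ 2 * W j ^ 2)) ^ (p / 2)),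
    tsum_univ fun j => ENNReal.ofReal (x j ^ 2 * W j ^ 2),
    ← ENNReal.rpow_mul]
  congr 1
  field_simp

section SigmaPartition

variable {A : Type*} {B : A → Type*}

/-- The paper's `P_σ`, for `P a = P^{a, σ a}`. -/
def sigmaPartition (P : ∀ a, Set (Set (B a))) : Set (Set (Σ a, B a)) :=
  {S | ∃ a, ∃ s ∈ P a, S = Sigma.mk a '' s}

lemma IsPartition.sigma {P : ∀ a, Set (Set (B a))} (hP : ∀ a, IsPartition (P a)) :
    IsPartition (sigmaPartition P) := by
  refine ⟨?_, ?_, ?_⟩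
  · rintro _ ⟨a, s, hs, rfl⟩
    exact ((hP a).1 s hs).image _
  · rintro _ ⟨a, s, hs, rfl⟩ _ ⟨a', s', hs', rfl⟩ hne
    obtain rfl | haa := eq_or_ne a a'
    · have hss : s ≠ s' := fun h => hne (by rw [h])
      exact (Set.disjoint_image_iff sigma_mk_injective).2 ((hP a).2.1 hs hs' hss)
    · refine Set.disjoint_left.2 ?_
      rintro _ ⟨b, -, rfl⟩ ⟨b', -, hb⟩
      exact haa (congrArg Sigma.fst hb).symm
  · refine Set.eq_univ_of_forall fun ⟨a, b⟩ => ?_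
    obtain ⟨s, hs, hbs⟩ := Set.mem_sUnion.1 ((hP a).2.2.symm ▸ Set.mem_univ b)
    exact ⟨_, ⟨a, s, hs, rfl⟩, b, hbs, rfl⟩

lemma sigmaPartition_bijective {P : ∀ a, Set (Set (B a))} (hne : ∀ a, ∀ s ∈ P a, s.Nonempty) :
    Function.Bijective fun q : Σ a, P a =>
      (⟨Sigma.mk q.1 '' q.2, q.1, q.2, q.2.2, rfl⟩ : sigmaPartition P) := by
  refine ⟨?_, ?_⟩
  · rintro ⟨a, s, hs⟩ ⟨a', s', hs'⟩ h
    obtain ⟨b, hb⟩ := hne a s hs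
    have himage : Sigma.mk a '' s = Sigma.mk a' '' s' := congrArg Subtype.val h
    obtain ⟨b', -, hbb'⟩ : (⟨a, b⟩ : Σ a, B a) ∈ Sigma.mk a' '' s' := himage ▸ ⟨b, hb, rfl⟩
    obtain rfl : a' = a := congrArg Sigma.fst hbb'
    obtain rfl : s = s' := Set.image_injective.2 sigma_mk_injective himage
    rfl
  · rintro ⟨_, a, s, hs, rfl⟩
    exact ⟨⟨a, s, hs⟩, rfl⟩

lemma pwNorm_sigmaPartition {p : ℝ} (hp : p ≠ 0) {P : ∀ a, Set (Set (B a))}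
    (hne : ∀ a, ∀ s ∈ P a, s.Nonempty) (w : ∀ a, B a → ℝ) (x : (Σ a, B a) → ℝ) :
    pwNorm p (sigmaPartition P) (fun j => w j.1 j.2) x
      = (∑' a, pwNorm p (P a) (w a) (fun b => x ⟨a, b⟩) ^ p) ^ (1 / p) := by
  rw [pwNorm, ← (Equiv.ofBijective _ (sigmaPartition_bijective hne)).tsum_eq,
    ENNReal.tsum_sigma']
  congr 1
  refine tsum_congr fun a => ?_
  rw [pwNorm, ← ENNReal.rpow_mul, one_div_mul_cancel hp, ENNReal.rpow_one]
  refine tsum_congr fun s => ?_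
  congr 1
  exact tsum_image (fun j : Σ a, B a => ENNReal.ofReal (x j ^ 2 * w j.1 j.2 ^ 2))
    sigma_mk_injective.injOn

lemma iSup_pwNorm_sigmaPartition {I : A → Type*} [∀ a, Nonempty (I a)] {p : ℝ} (hp : 0 < p)
    (P : ∀ a, I a → Set (Set (B a))) (w : ∀ a, I a → B a → ℝ)
    (hne : ∀ a i, ∀ s ∈ P a i, s.Nonempty) (x : (Σ a, B a) → ℝ) :
    ⨆ σ : ∀ a, I a, pwNorm p (sigmaPartition fun a => P a (σ a)) (fun j => w j.1 (σ j.1) j.2) x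
      = (∑' a, (⨆ i : I a, pwNorm p (P a i) (w a i) (fun b => x ⟨a, b⟩)) ^ p) ^ (1 / p) := by
  calc _ = ⨆ σ : ∀ a, I a,
        (∑' a, pwNorm p (P a (σ a)) (w a (σ a)) (fun b => x ⟨a, b⟩) ^ p) ^ (1 / p) :=
        iSup_congr fun σ => pwNorm_sigmaPartition hp.ne' (fun a => hne a (σ a)) _ x
    _ = _ := by
      rw [← ENNReal.iSup_rpow (one_div_pos.2 hp), ← ENNReal.tsum_iSup_eq_iSup_pi_tsum
        fun a i => pwNorm p (P a i) (w a i) (fun b => x ⟨a, b⟩) ^ p]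
      simp_rw [ENNReal.iSup_rpow hp]

lemma pwNorm_singleton_univ_sigma {p : ℝ} (hp : p ≠ 0) (W : A → ℝ) (w : ∀ a, B a → ℝ)
    (x : (Σ a, B a) → ℝ) :
    pwNorm p {Set.univ} (fun j => W j.1 * w j.1 j.2) x
      = (∑' a, ENNReal.ofReal (W a ^ 2) *
          ∑' b, ENNReal.ofReal (x ⟨a, b⟩ ^ 2 * w a b ^ 2)) ^ ((1 : ℝ) / 2) := by
  rw [pwNorm_singleton_univ hp, ENNReal.tsum_sigma']
  congr 1
  refine tsum_congr fun a => ?_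
  rw [← ENNReal.tsum_mul_left]
  refine tsum_congr fun b => ?_
  rw [← ENNReal.ofReal_mul (sq_nonneg _)]
  congr 1
  ring

end SigmaPartition

theorem statement2_general {A : Type*} {B : A → Type*}
    {I : A → Type*} (p : ℝ) (hp : 2 < p)
    (PP : ∀ a, I a → Set (Set (B a))) (WW : ∀ a, I a → B a → ℝ)
    (hPart : ∀ a i, IsPartition (PP a i)) (hWt : ∀ a i, IsWeight (WW a i))
    (i0 : ∀ a, I a)
    (W : A → ℝ) (hW : IsWeight W) :
    (∀ x : (Σ a, B a) → ℝ,
      max ((∑' a, (⨆ i : I a, pwNorm p (PP a i) (WW a i) (fun b => x ⟨a, b⟩)) ^ p) ^ (1 / p))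
          ((∑' a, ENNReal.ofReal ((W a) ^ 2) *
              ∑' b, ENNReal.ofReal ((x ⟨a, b⟩) ^ 2 * (WW a (i0 a) b) ^ 2)) ^ ((1 : ℝ) / 2))
        = (⨆ σ : ∀ a, I a,
            pwNorm p {S | ∃ a, ∃ s ∈ PP a (σ a), S = Sigma.mk a '' s}
              (fun j => WW j.1 (σ j.1) j.2) x) ⊔
          pwNorm p {Set.univ} (fun j => W j.1 * WW j.1 (i0 j.1) j.2) x) ∧
    (∃ 𝒬 : Set (PWPair (Σ a, B a)), IsPWFamily 𝒬 ∧
      ∀ x : (Σ a, B a) → ℝ,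
        max ((∑' a, (⨆ i : I a, pwNorm p (PP a i) (WW a i) (fun b => x ⟨a, b⟩)) ^ p) ^ (1 / p))
            ((∑' a, ENNReal.ofReal ((W a) ^ 2) *
                ∑' b, ENNReal.ofReal ((x ⟨a, b⟩) ^ 2 * (WW a (i0 a) b) ^ 2)) ^ ((1 : ℝ) / 2))
          = famNorm p 𝒬 x) := by
  have hp0 : 0 < p := by linarith
  have : ∀ a, Nonempty (I a) := fun a => ⟨i0 a⟩
  have key := fun x : (Σ a, B a) → ℝ => congrArg₂ max
    (iSup_pwNorm_sigmaPartition hp0 PP WW (fun a i => (hPart a i).1) x).symm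
    (pwNorm_singleton_univ_sigma hp0.ne' W (fun a => WW a (i0 a)) x).symm
  refine ⟨key, ?_⟩
  set Qσ : Set (PWPair (Σ a, B a)) := Set.range fun σ : ∀ a, I a =>
    (sigmaPartition fun a => PP a (σ a), fun j => WW j.1 (σ j.1) j.2)
  have hQσ : IsPWFamily Qσ := by
    rintro _ ⟨σ, rfl⟩
    exact ⟨IsPartition.sigma fun a => hPart a (σ a), fun j => hWt j.1 (σ j.1) j.2⟩
  -- `{Set.univ}` is a partition only of a nonempty type.
  rcases isEmpty_or_nonempty (Σ a, B a) with hE | hE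
  · refine ⟨Qσ, hQσ, fun x => ?_⟩
    rw [key, pwNorm_of_isEmpty hp0, famNorm, iSup_range]
    exact sup_bot_eq _
  · refine ⟨Qσ ∪ {({Set.univ}, fun j => W j.1 * WW j.1 (i0 j.1) j.2)}, ?_, fun x => ?_⟩
    · rintro PW (hPW | rfl)
      exacts [hQσ PW hPW,
        ⟨isPartition_singleton_univ, IsWeight.mul (fun j => hW j.1) fun j => hWt j.1 (i0 j.1) j.2⟩]
    · rw [key, famNorm, iSup_union, iSup_range, iSup_singleton]

/-- The `(p,2,W)`-sum of spaces with norms given by partitions and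
weights has norm given by partitions and weights: for every `x` on the disjoint union
`Σ a, B a`, the `(p,2,W)`-sum norm equals the supremum of `‖x‖_{P_σ,W_σ}` over all
choice functions `σ`, together with `‖x‖_{P_(),W_()}`.  In particular there is a family
`𝒬` of partition–weight pairs on `Σ a, B a` computing this norm. -/
theorem statement2 {A : Type*} [Countable A] {B : A → Type*} [∀ a, Countable (B a)]
    {I : A → Type*} (p : ℝ) (hp : 2 < p)
    (PP : ∀ a, I a → Set (Set (B a))) (WW : ∀ a, I a → B a → ℝ)
    (hPart : ∀ a i, IsPartition (PP a i)) (hWt : ∀ a i, IsWeight (WW a i))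
    (i0 : ∀ a, I a) (hind : ∀ a, PP a (i0 a) = {Set.univ})
    (W : A → ℝ) (hW : IsWeight W) :
    (∀ x : (Σ a, B a) → ℝ,
      max ((∑' a, (⨆ i : I a, pwNorm p (PP a i) (WW a i) (fun b => x ⟨a, b⟩)) ^ p) ^ (1 / p))
          ((∑' a, ENNReal.ofReal ((W a) ^ 2) *
              ∑' b, ENNReal.ofReal ((x ⟨a, b⟩) ^ 2 * (WW a (i0 a) b) ^ 2)) ^ ((1 : ℝ) / 2))
        = (⨆ σ : ∀ a, I a,
            pwNorm p {S | ∃ a, ∃ s ∈ PP a (σ a), S = Sigma.mk a '' s}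
              (fun j => WW j.1 (σ j.1) j.2) x) ⊔
          pwNorm p {Set.univ} (fun j => W j.1 * WW j.1 (i0 j.1) j.2) x) ∧
    (∃ 𝒬 : Set (PWPair (Σ a, B a)), IsPWFamily 𝒬 ∧
      ∀ x : (Σ a, B a) → ℝ,
        max ((∑' a, (⨆ i : I a, pwNorm p (PP a i) (WW a i) (fun b => x ⟨a, b⟩)) ^ p) ^ (1 / p))
            ((∑' a, ENNReal.ofReal ((W a) ^ 2) *
                ∑' b, ENNReal.ofReal ((x ⟨a, b⟩) ^ 2 * (WW a (i0 a) b) ^ 2)) ^ ((1 : ℝ) / 2))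
          = famNorm p 𝒬 x) :=
  statement2_general p hp PP WW hPart hWt i0 W hW
end
end

section
/- Let p > 2, let A be a countable index set, and for each a ∈ A let X_a be a space of functions on a countable set B_a with norm given by an admissible family of partitions and weights on B_a. Then there exists a family 𝒬 of partition–weight pairs on the disjoint union B = ⨆_{a∈A} B_a such that for every x = (x_a)_{a∈A} with x_a ∈ X_a, the ℓ_p-sum norm satisfies (Σ_{a∈A} ‖x_a‖_{X_a}^p)^{1/p} = sup_{(P,V)∈𝒬} ‖x‖_{P,V}. In particular, the ℓ_p-sum (Σ_a X_a)_{ℓ_p} has a norm given by partitions and weights. -/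
set_option maxHeartbeats 1000000

open scoped ENNReal
open MeasureTheory Filter

noncomputable section

variable {α : Type*}

/-- A family of partition–weight pairs on `α` is admissible if it contains the discrete
partition with constant weight `1`, and the indiscrete partition with some weight. -/
def IsAdmissible (𝒞 : Set (PWPair α)) : Prop :=
  ((Set.range fun a : α => ({a} : Set α)), fun _ => (1 : ℝ)) ∈ 𝒞 ∧
  ∃ W : α → ℝ, (({Set.univ} : Set (Set α)), W) ∈ 𝒞

/-! ### Auxiliary lemmas -/

/-- rpow with positive exponent commutes with suprema in `ℝ≥0∞`. -/
lemma iSup_rpow' {ι : Sort*} (g : ι → ℝ≥0∞) {y : ℝ} (hy : 0 < y) :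
    (⨆ i, g i) ^ y = ⨆ i, g i ^ y := by
  have h := map_iSup (ENNReal.orderIsoRpow y hy) g
  simp only [ENNReal.orderIsoRpow_apply] at h
  exact h

lemma biSup_rpow' {ι : Type*} (s : Set ι) (g : ι → ℝ≥0∞) {y : ℝ} (hy : 0 < y) :
    (⨆ i ∈ s, g i) ^ y = ⨆ i ∈ s, g i ^ y := by
  rw [iSup_rpow' _ hy]
  exact iSup_congr fun i => iSup_rpow' _ hy

/-- Finite interchange of sums and independent suprema in `ℝ≥0∞`. -/
lemma finsum_iSup_pi {A : Type*} {ι : A → Type*} [∀ a, Nonempty (ι a)]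
    (g : ∀ a, ι a → ℝ≥0∞) (s : Finset A) :
    ∑ a ∈ s, ⨆ c, g a c = ⨆ f : ∀ a, ι a, ∑ a ∈ s, g a (f a) := by
  classical
  induction s using Finset.induction_on with
  | empty => simp
  | @insert a s ha IH =>
    simp only [Finset.sum_insert ha]
    rw [IH, ENNReal.iSup_add]
    apply le_antisymm
    · refine iSup_le fun c => ?_
      rw [ENNReal.add_iSup]
      refine iSup_le fun f => ?_
      refine le_trans (le_of_eq ?_) (le_iSup (fun f : ∀ a, ι a => g a (f a) + ∑ b ∈ s, g b (f b))
        (Function.update f a c))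
      rw [Function.update_self]
      congr 1
      exact Finset.sum_congr rfl fun b hb => by
        rw [Function.update_of_ne (by rintro rfl; exact ha hb)]
    · refine iSup_le fun f => le_trans ?_ (le_iSup _ (f a))
      rw [ENNReal.add_iSup]
      exact le_iSup (fun i : ∀ a, ι a => g a (f a) + ∑ b ∈ s, g b (i b)) f

/-- Countable interchange of sums and independent suprema in `ℝ≥0∞`. -/
lemma tsum_iSup_pi {A : Type*} {ι : A → Type*} [∀ a, Nonempty (ι a)]
    (g : ∀ a, ι a → ℝ≥0∞) :
    ∑' a, ⨆ c, g a c = ⨆ f : ∀ a, ι a, ∑' a, g a (f a) := by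
  apply le_antisymm
  · rw [ENNReal.tsum_eq_iSup_sum]
    refine iSup_le fun s => ?_
    rw [finsum_iSup_pi]
    exact iSup_mono fun f => ENNReal.sum_le_tsum s
  · exact iSup_le fun f => ENNReal.tsum_le_tsum fun a => le_iSup _ (f a)

/-- The partition of a sigma type obtained from partitions of each fiber. -/
def sigmaPart {A : Type*} {B : A → Type*} (P : ∀ a, Set (Set (B a))) :
    Set (Set (Σ a, B a)) :=
  ⋃ a, (fun N => Sigma.mk a '' N) '' P a

/-- The weight on a sigma type obtained from weights on each fiber. -/
def sigmaW {A : Type*} {B : A → Type*} (W : ∀ a, B a → ℝ) : (Σ a, B a) → ℝ :=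
  fun j => W j.1 j.2

lemma sigmaPart_isPartition {A : Type*} {B : A → Type*} {P : ∀ a, Set (Set (B a))}
    (hP : ∀ a, IsPartition (P a)) : IsPartition (sigmaPart P) := by
  refine ⟨?_, ?_, ?_⟩
  · rintro M hM
    obtain ⟨a, ⟨N, hN, rfl⟩⟩ := Set.mem_iUnion.1 hM
    obtain ⟨b, hb⟩ := (hP a).1 N hN
    exact ⟨⟨a, b⟩, Set.mem_image_of_mem _ hb⟩
  · rintro M hM M' hM' hne
    obtain ⟨a, ⟨N, hN, rfl⟩⟩ := Set.mem_iUnion.1 hM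
    obtain ⟨a', ⟨N', hN', rfl⟩⟩ := Set.mem_iUnion.1 hM'
    rw [Function.onFun, Set.disjoint_left]
    rintro j ⟨b, hb, rfl⟩ ⟨b', hb', hbe⟩
    obtain rfl : a' = a := congrArg Sigma.fst hbe
    obtain rfl : b' = b := sigma_mk_injective hbe
    have hNN : N ≠ N' := by rintro rfl; exact hne rfl
    exact Set.disjoint_left.1 ((hP _).2.1 hN hN' hNN) hb hb'
  · ext ⟨a, b⟩
    simp only [Set.mem_univ, iff_true]
    have hb : b ∈ ⋃₀ P a := by rw [(hP a).2.2]; trivial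
    obtain ⟨N, hN, hbN⟩ := hb
    exact ⟨Sigma.mk a '' N, Set.mem_iUnion.2 ⟨a, Set.mem_image_of_mem _ hN⟩,
      Set.mem_image_of_mem _ hbN⟩

/-- Key computation: the `pwNorm` on the sigma type is the `ℓ_p`-sum of fiberwise norms. -/
lemma pwNorm_sigma {A : Type*} {B : A → Type*} {p : ℝ} (hp : 0 < p)
    {P : ∀ a, Set (Set (B a))} (hP : ∀ a, IsPartition (P a)) (W : ∀ a, B a → ℝ)
    (x : (Σ a, B a) → ℝ) :
    pwNorm p (sigmaPart P) (sigmaW W) x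
      = (∑' a, (pwNorm p (P a) (W a) fun b => x ⟨a, b⟩) ^ p) ^ (1 / p) := by
  have hrc : ∀ t : ℝ≥0∞, (t ^ (1 / p)) ^ p = t := fun t => by
    rw [← ENNReal.rpow_mul, one_div_mul_cancel hp.ne', ENNReal.rpow_one]
  -- the equivalence between `Σ a, P a` and the sigma partition
  have hmem : ∀ q : Σ a, ↥(P a), Sigma.mk q.1 '' q.2.1 ∈ sigmaPart P := fun q =>
    Set.mem_iUnion.2 ⟨q.1, Set.mem_image_of_mem _ q.2.2⟩
  have hbij : Function.Bijective
      (fun q : Σ a, ↥(P a) => (⟨Sigma.mk q.1 '' q.2.1, hmem q⟩ : ↥(sigmaPart P))) := by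
    constructor
    · rintro ⟨a, N, hN⟩ ⟨a', N', hN'⟩ h
      simp only [Subtype.mk.injEq] at h
      obtain ⟨b, hb⟩ := (hP a).1 N hN
      have hmem' : (⟨a, b⟩ : Σ a, B a) ∈ Sigma.mk a' '' N' := h ▸ Set.mem_image_of_mem _ hb
      obtain ⟨b', _, hbeq⟩ := hmem'
      obtain rfl : a' = a := congrArg Sigma.fst hbeq
      obtain rfl : N = N' := Set.image_injective.2 sigma_mk_injective h
      rfl
    · rintro ⟨M, hM⟩
      obtain ⟨a, ⟨N, hN, rfl⟩⟩ := Set.mem_iUnion.1 hM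
      exact ⟨⟨a, ⟨N, hN⟩⟩, rfl⟩
  let e : (Σ a, ↥(P a)) ≃ ↥(sigmaPart P) := Equiv.ofBijective _ hbij
  unfold pwNorm
  congr 1
  have h1 := (e.tsum_eq (fun N : ↥(sigmaPart P) =>
    (∑' j : N.1, ENNReal.ofReal ((x j.1) ^ 2 * (sigmaW W j.1) ^ 2)) ^ (p / 2))).symm
  rw [h1, ENNReal.tsum_sigma']
  refine tsum_congr fun a => ?_
  rw [hrc]
  refine tsum_congr fun N => ?_
  congr 1
  show (∑' j : ↥(Sigma.mk a '' N.1), ENNReal.ofReal ((x j.1) ^ 2 * (sigmaW W j.1) ^ 2)) = _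
  -- inner sum over the image equals the sum over the fiber set
  have hI := ((Equiv.Set.image (Sigma.mk a) N.1 sigma_mk_injective).tsum_eq
    (fun j : ↥(Sigma.mk a '' N.1) =>
      ENNReal.ofReal ((x j.1) ^ 2 * (sigmaW W j.1) ^ 2))).symm
  rw [hI]
  exact tsum_congr fun b => rfl

/-- The `ℓ_p`-sum of spaces with norms given by admissible families of
partitions and weights has a norm given by partitions and weights on the disjoint
union. -/
theorem statement3 {A : Type*} [Countable A] {B : A → Type*} [∀ a, Countable (B a)]
    (p : ℝ) (hp : 2 < p)
    (𝒞 : ∀ a, Set (PWPair (B a)))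
    (hgood : ∀ a, IsPWFamily (𝒞 a)) (hadm : ∀ a, IsAdmissible (𝒞 a)) :
    ∃ 𝒬 : Set (PWPair (Σ a, B a)), IsPWFamily 𝒬 ∧
      ∀ x : (Σ a, B a) → ℝ,
        (∑' a, (famNorm p (𝒞 a) fun b => x ⟨a, b⟩) ^ p) ^ (1 / p) = famNorm p 𝒬 x := by
  have hp0 : (0 : ℝ) < p := by linarith
  have hp0' : (0 : ℝ) < 1 / p := by positivity
  have hne : ∀ a, Nonempty ↥(𝒞 a) := fun a => ⟨⟨_, (hadm a).1⟩⟩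
  classical
  set S : Set (∀ a, PWPair (B a)) := {f | ∀ a, f a ∈ 𝒞 a} with hS
  set Q : (∀ a, PWPair (B a)) → PWPair (Σ a, B a) :=
    fun f => (sigmaPart (fun a => (f a).1), sigmaW (fun a => (f a).2)) with hQ
  refine ⟨Q '' S, ?_, ?_⟩
  · rintro PW ⟨f, hf, rfl⟩
    refine ⟨sigmaPart_isPartition fun a => (hgood a _ (hf a)).1, fun j => ?_⟩
    exact (hgood j.1 _ (hf j.1)).2 j.2
  · intro x
    have hrc : ∀ t : ℝ≥0∞, (t ^ (1 / p)) ^ p = t := fun t => by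
      rw [← ENNReal.rpow_mul, one_div_mul_cancel hp0.ne', ENNReal.rpow_one]
    -- per-fiber supremum quantity
    set n : ∀ a, PWPair (B a) → ℝ≥0∞ :=
      fun a c => (pwNorm p c.1 c.2 fun b => x ⟨a, b⟩) ^ p with hn
    rw [famNorm, iSup_image]
    have hfq : ∀ f ∈ S, pwNorm p (Q f).1 (Q f).2 x = (∑' a, n a (f a)) ^ (1 / p) := by
      intro f hf
      rw [hQ]
      rw [pwNorm_sigma hp0 (fun a => (hgood a _ (hf a)).1)]
    rw [biSup_congr hfq]
    rw [← biSup_rpow' S (fun f => ∑' a, n a (f a)) hp0']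
    congr 1
    -- identify the bounded supremum with a supremum over the dependent product
    have hstep : (⨆ f ∈ S, ∑' a, n a (f a))
        = ⨆ F : ∀ a, ↥(𝒞 a), ∑' a, n a (F a).1 := by
      apply le_antisymm
      · refine iSup₂_le fun f hf => ?_
        exact le_iSup (fun F : ∀ a, ↥(𝒞 a) => ∑' a, n a (F a).1) (fun a => ⟨f a, hf a⟩)
      · refine iSup_le fun F => ?_
        have hFS : (fun a => ((F a : PWPair (B a)))) ∈ S := fun a => (F a).2
        exact le_biSup (fun f => ∑' a, n a (f a)) hFS
    rw [hstep, ← tsum_iSup_pi (fun a (c : ↥(𝒞 a)) => n a c.1)]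
    refine tsum_congr fun a => ?_
    rw [famNorm, biSup_rpow' (𝒞 a) _ hp0]
    exact iSup_subtype'
end
end

section
/- Let p > 2 and let 𝒫 be a finite family of partition–weight pairs on a countable set A. Then the envelope norm generated by 𝒫 is equivalent on X(𝒫) to ‖·‖_𝒫: there exists a constant C ≥ 1 such that ‖x‖_𝒫 ≤ |||x||| ≤ C‖x‖_𝒫 for all x ∈ X(𝒫). -/
open scoped ENNReal
open MeasureTheory Filter

noncomputable section

variable {α : Type*}

/-- The block of the partition `Q` containing `b` (for a genuine partition this is
the unique element of `Q` containing `b`). -/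
def blockOf (Q : Set (Set α)) (b : α) : Set α := ⋃₀ {q ∈ Q | b ∈ q}

/-- The partition `P(Q,T)` obtained from a partition `Q` and a choice `T` of a
partition–weight pair for each block of `Q`. -/
def envPartition (Q : Set (Set α)) (T : Set α → PWPair α) : Set (Set α) :=
  {K | K.Nonempty ∧ ∃ q ∈ Q, ∃ s ∈ (T q).1, K = q ∩ s}

/-- The weight `W(Q,T)`: on the block `q` of `Q` it is the weight chosen by `T q`. -/
def envWeight (Q : Set (Set α)) (T : Set α → PWPair α) : α → ℝ :=
  fun b => (T (blockOf Q b)).2 b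

/-- A family of partition–weight pairs satisfies the envelope property if it is
closed under the operation `(Q, T) ↦ (P(Q,T), W(Q,T))`. -/
def EnvelopeProp (𝒞 : Set (PWPair α)) : Prop :=
  ∀ Q : Set (Set α), IsPartition Q → ∀ T : Set α → PWPair α, (∀ q ∈ Q, T q ∈ 𝒞) →
    (envPartition Q T, envWeight Q T) ∈ 𝒞

/-- The family `𝒞̃` of all pairs `(P(Q,T), W(Q,T))`. -/
def envFam (𝒞 : Set (PWPair α)) : Set (PWPair α) :=
  {PW | ∃ Q T, IsPartition Q ∧ (∀ q ∈ Q, T q ∈ 𝒞) ∧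
    PW = (envPartition Q T, envWeight Q T)}

/-- The envelope norm generated by `𝒞`. -/
def envNorm (p : ℝ) (𝒞 : Set (PWPair α)) (x : α → ℝ) : ℝ≥0∞ := famNorm p (envFam 𝒞) x


/-!
Each pair `(P, W) ∈ 𝒞` is itself an envelope pair (refine it by the trivial partition of `A`),
which gives `‖x‖_𝒞 ≤ |||x|||`. Conversely, a block of `P(Q,T)` is `q ∩ s` with `q ∈ Q` and `s` a
block of some `T(q) = c ∈ 𝒞`. Grouping the blocks according to `c`, and using that for
`r = p/2 ≥ 1` the map `t ↦ t^r` is superadditive, so that cutting `s` into the disjoint pieces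
`q ∩ s` can only decrease `Σ (Σ_j x_j² w_j²)^r`, gives
`‖x‖_{P(Q,T),W(Q,T)}^p ≤ Σ_{c ∈ 𝒞} ‖x‖_c^p ≤ #𝒞 · ‖x‖_𝒞^p`, i.e. `C = (#𝒞)^{1/p}` works.
-/

namespace ENNReal

theorem tsum_rpow_le_rpow_tsum {ι : Type*} (f : ι → ℝ≥0∞) {r : ℝ} (hr : 1 ≤ r) :
    ∑' i, f i ^ r ≤ (∑' i, f i) ^ r := by
  have split : ∀ a : ℝ≥0∞, a ^ r = a ^ (r - 1) * a := fun a => by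
    conv_lhs => rw [show r = (r - 1) + 1 by ring]
    rw [rpow_add_of_nonneg _ _ (by linarith) zero_le_one, rpow_one]
  calc ∑' i, f i ^ r = ∑' i, f i ^ (r - 1) * f i := by simp_rw [← split]
    _ ≤ ∑' i, (∑' j, f j) ^ (r - 1) * f i :=
        ENNReal.tsum_le_tsum fun i =>
          mul_le_mul_left (rpow_le_rpow (ENNReal.le_tsum i) (by linarith)) _
    _ = (∑' i, f i) ^ r := by rw [ENNReal.tsum_mul_left, ← split]

theorem tsum_rpow_tsum_inter_le (a : α → ℝ≥0∞) {Q : Set (Set α)}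
    (hQ : Q.PairwiseDisjoint id) (s : Set α) {r : ℝ} (hr : 1 ≤ r) :
    ∑' q : Q, (∑' j : ↥(q.1 ∩ s), a j) ^ r ≤ (∑' j : s, a j) ^ r := by
  refine (tsum_rpow_le_rpow_tsum _ hr).trans (rpow_le_rpow ?_ (by linarith))
  have hdisj : Q.PairwiseDisjoint (· ∩ s) := hQ.mono_on fun q _ => Set.inter_subset_left
  rw [← ENNReal.tsum_biUnion' hdisj]
  exact tsum_mono_subtype a (Set.iUnion₂_subset fun _ _ => Set.inter_subset_right)

end ENNReal

def blockEnergy (W x : α → ℝ) (N : Set α) : ℝ≥0∞ :=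
  ∑' j : N, ENNReal.ofReal (x j ^ 2 * W j ^ 2)

theorem pwNorm_rpow {p : ℝ} (hp : 0 < p) (P : Set (Set α)) (W x : α → ℝ) :
    pwNorm p P W x ^ p = ∑' N : P, blockEnergy W x N ^ (p / 2) := by
  rw [pwNorm, ← ENNReal.rpow_mul, one_div_mul_cancel hp.ne', ENNReal.rpow_one]
  rfl

theorem pwNorm_le_famNorm {p : ℝ} {𝒞 : Set (PWPair α)} {PW : PWPair α} (h : PW ∈ 𝒞)
    (x : α → ℝ) : pwNorm p PW.1 PW.2 x ≤ famNorm p 𝒞 x :=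
  le_iSup₂ (f := fun PW (_ : PW ∈ 𝒞) => pwNorm p PW.1 PW.2 x) PW h

theorem blockOf_eq {Q : Set (Set α)} (hQ : Q.PairwiseDisjoint id) {q : Set α} (hq : q ∈ Q)
    {b : α} (hb : b ∈ q) : blockOf Q b = q := by
  have hblocks : {q' ∈ Q | b ∈ q'} = {q} :=
    Set.eq_singleton_iff_unique_mem.2 ⟨⟨hq, hb⟩, fun _ h => hQ.elim_set h.1 hq b h.2 hb⟩
  rw [blockOf, hblocks, Set.sUnion_singleton]

theorem blockEnergy_envWeight_inter {Q : Set (Set α)} (hQ : Q.PairwiseDisjoint id)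
    (T : Set α → PWPair α) {q : Set α} (hq : q ∈ Q) (s : Set α) (x : α → ℝ) :
    blockEnergy (envWeight Q T) x (q ∩ s) = blockEnergy (T q).2 x (q ∩ s) :=
  tsum_congr fun j => by rw [envWeight, blockOf_eq hQ hq j.2.1]

theorem tsum_envPartition_le (Q : Set (Set α)) (T : Set α → PWPair α)
    (g : Set α → ℝ≥0∞) :
    ∑' K : envPartition Q T, g K ≤ ∑' q : Q, ∑' s : (T q).1, g (q ∩ s) := by
  let φ : (Σ q : Q, (T q).1) → Set α := fun z => z.1.1 ∩ z.2.1
  have hsub : envPartition Q T ⊆ Set.range φ := by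
    rintro _ ⟨-, q, hq, s, hs, rfl⟩
    exact ⟨⟨⟨q, hq⟩, ⟨s, hs⟩⟩, rfl⟩
  calc ∑' K : envPartition Q T, g K ≤ ∑' K : Set.range φ, g K :=
        ENNReal.tsum_mono_subtype g hsub
    _ ≤ ∑' z, g (φ z) :=
        ENNReal.tsum_le_tsum_comp_of_surjective Set.rangeFactorization_surjective _
    _ = ∑' q : Q, ∑' s : (T q).1, g (q ∩ s) := ENNReal.tsum_sigma' _

theorem pwNorm_envPartition_rpow_le {p : ℝ} (hp : 2 ≤ p) {Q : Set (Set α)}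
    (hQ : Q.PairwiseDisjoint id) {T : Set α → PWPair α} (S : Finset (PWPair α))
    (hT : ∀ q ∈ Q, T q ∈ S) (x : α → ℝ) :
    pwNorm p (envPartition Q T) (envWeight Q T) x ^ p ≤ ∑ c ∈ S, pwNorm p c.1 c.2 x ^ p := by
  have hr : 1 ≤ p / 2 := by linarith
  simp only [pwNorm_rpow (by linarith : 0 < p)]
  calc ∑' K : envPartition Q T, blockEnergy (envWeight Q T) x K ^ (p / 2)
      ≤ ∑' q : Q, ∑' s : (T q).1, blockEnergy (envWeight Q T) x (q ∩ s) ^ (p / 2) :=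
        tsum_envPartition_le Q T fun K => blockEnergy (envWeight Q T) x K ^ (p / 2)
    _ = ∑' q : Q, ∑' s : (T q).1, blockEnergy (T q).2 x (q ∩ s) ^ (p / 2) := by
        simp only [fun (q : Q) s => blockEnergy_envWeight_inter hQ T q.2 s x]
    _ ≤ ∑' q : Q, ∑ c ∈ S, ∑' s : c.1, blockEnergy c.2 x (q ∩ s) ^ (p / 2) :=
        ENNReal.tsum_le_tsum fun q =>
          Finset.single_le_sum
            (f := fun c : PWPair α => ∑' s : c.1, blockEnergy c.2 x (q ∩ s) ^ (p / 2))
            (fun _ _ => zero_le) (hT q q.2)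
    _ = ∑ c ∈ S, ∑' s : c.1, ∑' q : Q, blockEnergy c.2 x (q ∩ s) ^ (p / 2) := by
        rw [Summable.tsum_finsetSum fun _ _ => ENNReal.summable]
        exact Finset.sum_congr rfl fun _ _ => ENNReal.tsum_comm
    _ ≤ ∑ c ∈ S, ∑' N : c.1, blockEnergy c.2 x N ^ (p / 2) := by
        gcongr with c _ s
        exact ENNReal.tsum_rpow_tsum_inter_le
          (fun j => ENNReal.ofReal (x j ^ 2 * c.2 j ^ 2)) hQ s hr

theorem envNorm_le_card_rpow_mul_famNorm {p : ℝ} (hp : 2 ≤ p) (S : Finset (PWPair α))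
    (x : α → ℝ) : envNorm p ↑S x ≤ (S.card : ℝ≥0∞) ^ (1 / p) * famNorm p ↑S x := by
  have hp0 : 0 < p := by linarith
  refine iSup₂_le ?_
  rintro _ ⟨Q, T, hQ, hT, rfl⟩
  rw [← ENNReal.rpow_le_rpow_iff hp0, ENNReal.mul_rpow_of_nonneg _ _ hp0.le,
    ← ENNReal.rpow_mul, one_div_mul_cancel hp0.ne', ENNReal.rpow_one]
  calc pwNorm p (envPartition Q T) (envWeight Q T) x ^ p ≤ ∑ c ∈ S, pwNorm p c.1 c.2 x ^ p :=
        pwNorm_envPartition_rpow_le hp hQ.2.1 S hT x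
    _ ≤ ∑ _c ∈ S, famNorm p ↑S x ^ p := by
        gcongr with c hc
        exact pwNorm_le_famNorm (Finset.mem_coe.2 hc) x
    _ = S.card * famNorm p ↑S x ^ p := by rw [Finset.sum_const, nsmul_eq_mul]

theorem isPartition_trivial : IsPartition ({Set.univ} \ {∅} : Set (Set α)) := by
  refine ⟨fun N hN => Set.nonempty_iff_ne_empty.2 hN.2,
    fun _ hN _ hM hNM => (hNM (hN.1.trans hM.1.symm)).elim,
    Set.eq_univ_of_forall fun a => ⟨Set.univ, ⟨rfl, ?_⟩, Set.mem_univ a⟩⟩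
  exact Set.nonempty_iff_ne_empty.1 ⟨a, Set.mem_univ a⟩

theorem envPartition_trivial {P : Set (Set α)} (hP : ∀ N ∈ P, N.Nonempty) (W : α → ℝ) :
    envPartition ({Set.univ} \ {∅}) (fun _ => (P, W)) = P := by
  ext K
  constructor
  · rintro ⟨-, q, ⟨rfl, -⟩, s, hs, rfl⟩
    rwa [Set.univ_inter]
  · intro hK
    obtain ⟨a, ha⟩ := hP K hK
    exact ⟨⟨a, ha⟩, Set.univ, ⟨rfl, Set.nonempty_iff_ne_empty.1 ⟨a, Set.mem_univ a⟩⟩, K, hK,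
      (Set.univ_inter K).symm⟩

theorem subset_envFam {𝒞 : Set (PWPair α)} (h𝒞 : ∀ PW ∈ 𝒞, IsPartition PW.1) :
    𝒞 ⊆ envFam 𝒞 := fun PW hPW =>
  ⟨{Set.univ} \ {∅}, fun _ => PW, isPartition_trivial, fun _ _ => hPW,
    by rw [envPartition_trivial (h𝒞 PW hPW).1]; rfl⟩

theorem famNorm_le_envNorm (p : ℝ) {𝒞 : Set (PWPair α)}
    (h𝒞 : ∀ PW ∈ 𝒞, IsPartition PW.1) (x : α → ℝ) : famNorm p 𝒞 x ≤ envNorm p 𝒞 x :=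
  biSup_mono (subset_envFam h𝒞)

theorem statement6_general {A : Type*} (p : ℝ) (hp : 2 < p)
    (𝒞 : Set (PWPair A)) (h𝒞 : IsPWFamily 𝒞) (hfin : 𝒞.Finite) :
    ∃ C : ℝ, 1 ≤ C ∧ ∀ x : A → ℝ, famNorm p 𝒞 x < ⊤ →
      famNorm p 𝒞 x ≤ envNorm p 𝒞 x ∧
      envNorm p 𝒞 x ≤ ENNReal.ofReal C * famNorm p 𝒞 x := by
  refine ⟨max 1 ((hfin.toFinset.card : ℝ) ^ (1 / p)), le_max_left _ _, fun x _ =>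
    ⟨famNorm_le_envNorm p (fun PW h => (h𝒞 PW h).1) x, ?_⟩⟩
  have hupper := envNorm_le_card_rpow_mul_famNorm hp.le hfin.toFinset x
  rw [hfin.coe_toFinset] at hupper
  refine hupper.trans (mul_le_mul_left ?_ _)
  rw [← ENNReal.ofReal_natCast, ENNReal.ofReal_rpow_of_nonneg (by positivity) (by positivity)]
  exact ENNReal.ofReal_le_ofReal (le_max_right _ _)

/-- For `p > 2` and a finite family `𝒞` of partition–weight pairs on a
countable set, the envelope norm generated by `𝒞` is equivalent to `‖·‖_𝒞` on `X(𝒞)`: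
there is `C ≥ 1` with `‖x‖_𝒞 ≤ |||x||| ≤ C ‖x‖_𝒞` for every `x ∈ X(𝒞)`. -/
theorem statement6 {A : Type*} [Countable A] (p : ℝ) (hp : 2 < p)
    (𝒞 : Set (PWPair A)) (h𝒞 : IsPWFamily 𝒞) (hfin : 𝒞.Finite) :
    ∃ C : ℝ, 1 ≤ C ∧ ∀ x : A → ℝ, famNorm p 𝒞 x < ⊤ →
      famNorm p 𝒞 x ≤ envNorm p 𝒞 x ∧
      envNorm p 𝒞 x ≤ ENNReal.ofReal C * famNorm p 𝒞 x :=
  statement6_general p hp 𝒞 h𝒞 hfin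
end
end
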